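/- CLUB upper bound: for finite discrete random variables Z and Y with joint distribution p, I(Z;Y) ≤ E_{p(y,z)}[ log p(y|z) ] − E_{p(y)p(z)}[ log p(y|z) ], i.e., mutual information is bounded above by the contrastive log-ratio upper bound evaluated at the true conditional. -/
import Mathlib


open Finset Real

/-- Probability that a finite-valued random variable `X` on the finite sample space `Ω`
(with pmf `pr`) takes the value `x`. -/
noncomputable def prOf {Ω α : Type*} [Fintype Ω] [DecidableEq α]
    (pr : Ω → ℝ) (X : Ω → α) (x : α) : ℝ :=
  ∑ ω, if X ω = x then pr ω else 0

/-- Shannon entropy of a finite discrete random variable. -/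
noncomputable def Hent {Ω α : Type*} [Fintype Ω] [Fintype α] [DecidableEq α]
    (pr : Ω → ℝ) (X : Ω → α) : ℝ :=
  ∑ x, Real.negMulLog (prOf pr X x)

/-- Conditional Shannon entropy `H(X | Y) = H(X, Y) - H(Y)`. -/
noncomputable def condH {Ω α β : Type*} [Fintype Ω] [Fintype α] [Fintype β]
    [DecidableEq α] [DecidableEq β] (pr : Ω → ℝ) (X : Ω → α) (Y : Ω → β) : ℝ :=
  Hent pr (fun ω => (X ω, Y ω)) - Hent pr Y

/-- Mutual information `I(X; Y) = H(Y) - H(Y | X)`. -/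
noncomputable def mi {Ω α β : Type*} [Fintype Ω] [Fintype α] [Fintype β]
    [DecidableEq α] [DecidableEq β] (pr : Ω → ℝ) (X : Ω → α) (Y : Ω → β) : ℝ :=
  Hent pr Y - condH pr Y X

/-- Conditional mutual information `I(X; Y | Z) = H(Y | Z) - H(Y | X, Z)`. -/
noncomputable def cmi {Ω α β γ : Type*} [Fintype Ω] [Fintype α] [Fintype β] [Fintype γ]
    [DecidableEq α] [DecidableEq β] [DecidableEq γ]
    (pr : Ω → ℝ) (X : Ω → α) (Y : Ω → β) (Z : Ω → γ) : ℝ :=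
  condH pr Y Z - condH pr Y (fun ω => (X ω, Z ω))

/-- CLUB upper bound: `I(Z;Y) ≤ E_{p(y,z)}[log p(y|z)] − E_{p(y)p(z)}[log p(y|z)]`. -/
theorem stmt_12 {Ω α β : Type*} [Fintype Ω] [Fintype α] [Fintype β]
    [DecidableEq α] [DecidableEq β]
    (pr : Ω → ℝ) (hpr : ∀ ω, 0 ≤ pr ω) (hsum : ∑ ω, pr ω = 1)
    (Y : Ω → α) (Z : Ω → β)
    (hpos : ∀ y z, 0 < prOf pr (fun ω => (Y ω, Z ω)) (y, z)) :
    mi pr Z Y ≤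
      (∑ y, ∑ z, prOf pr (fun ω => (Y ω, Z ω)) (y, z) *
          Real.log (prOf pr (fun ω => (Y ω, Z ω)) (y, z) / prOf pr Z z))
      - (∑ y, ∑ z, prOf pr Y y * prOf pr Z z *
          Real.log (prOf pr (fun ω => (Y ω, Z ω)) (y, z) / prOf pr Z z)) := by
  classical
  set J : α → β → ℝ := fun y z => prOf pr (fun ω => (Y ω, Z ω)) (y, z) with hJdef
  have hJpos : ∀ y z, 0 < J y z := hpos
  -- nonemptiness
  have hΩ : Nonempty Ω := by
    by_contra h
    rw [not_nonempty_iff] at h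
    rw [Finset.univ_eq_empty, Finset.sum_empty] at hsum
    norm_num at hsum
  have hα : Nonempty α := ⟨Y hΩ.some⟩
  have hβ : Nonempty β := ⟨Z hΩ.some⟩
  -- marginals
  have hPz : ∀ z, prOf pr Z z = ∑ y, J y z := by
    intro z
    simp only [hJdef, prOf]
    rw [Finset.sum_comm]
    refine Finset.sum_congr rfl fun ω _ => ?_
    by_cases h : Z ω = z <;> simp [Prod.ext_iff, h, ite_and]
  have hPy : ∀ y, prOf pr Y y = ∑ z, J y z := by
    intro y
    simp only [hJdef, prOf]
    rw [Finset.sum_comm]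
    refine Finset.sum_congr rfl fun ω _ => ?_
    by_cases h : Y ω = y <;> simp [Prod.ext_iff, h, ite_and]
  have hPzpos : ∀ z, 0 < prOf pr Z z := fun z => by
    rw [hPz]
    exact Finset.sum_pos (fun y _ => hJpos y z) Finset.univ_nonempty
  have hPypos : ∀ y, 0 < prOf pr Y y := fun y => by
    rw [hPy]
    exact Finset.sum_pos (fun z _ => hJpos y z) Finset.univ_nonempty
  have hPy1 : ∑ y, prOf pr Y y = 1 := by
    simp only [prOf]
    rw [Finset.sum_comm]
    rw [← hsum]
    refine Finset.sum_congr rfl fun ω _ => ?_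
    simp [Finset.sum_ite_eq]
  have hPz1 : ∑ z, prOf pr Z z = 1 := by
    simp only [prOf]
    rw [Finset.sum_comm]
    rw [← hsum]
    refine Finset.sum_congr rfl fun ω _ => ?_
    simp [Finset.sum_ite_eq]
  have hJ1 : ∑ y, ∑ z, J y z = 1 := by
    rw [← hPy1]
    exact Finset.sum_congr rfl fun y _ => (hPy y).symm
  -- rewrite mi
  have hHYZ : Hent pr (fun ω => (Y ω, Z ω)) = ∑ y, ∑ z, Real.negMulLog (J y z) := by
    simp only [Hent, Fintype.sum_prod_type, hJdef]
  have hmi : mi pr Z Y = (∑ y, Real.negMulLog (prOf pr Y y))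
      - (∑ y, ∑ z, Real.negMulLog (J y z)) + (∑ z, Real.negMulLog (prOf pr Z z)) := by
    simp only [mi, condH]
    rw [hHYZ]
    simp only [Hent]
    ring
  -- the first sum A
  have hA : (∑ y, ∑ z, J y z * Real.log (J y z / prOf pr Z z))
      = (∑ y, ∑ z, J y z * Real.log (J y z)) - ∑ z, prOf pr Z z * Real.log (prOf pr Z z) := by
    have : ∀ y z, J y z * Real.log (J y z / prOf pr Z z)
        = J y z * Real.log (J y z) - J y z * Real.log (prOf pr Z z) := by
      intro y z
      rw [Real.log_div (hJpos y z).ne' (hPzpos z).ne']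
      ring
    simp only [this, Finset.sum_sub_distrib]
    congr 1
    rw [Finset.sum_comm]
    refine Finset.sum_congr rfl fun z _ => ?_
    rw [← Finset.sum_mul, ← hPz z]
  -- key inequality: B ≤ ∑ Py log Py
  have hB : (∑ y, ∑ z, prOf pr Y y * prOf pr Z z * Real.log (J y z / prOf pr Z z))
      ≤ ∑ y, prOf pr Y y * Real.log (prOf pr Y y) := by
    have hstep : (∑ y, ∑ z, prOf pr Y y * prOf pr Z z * Real.log (J y z / prOf pr Z z))
        ≤ ∑ y, ∑ z, (J y z - prOf pr Y y * prOf pr Z z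
            + prOf pr Y y * prOf pr Z z * Real.log (prOf pr Y y)) := by
      refine Finset.sum_le_sum fun y _ => Finset.sum_le_sum fun z _ => ?_
      have hy := hPypos y
      have hz := hPzpos z
      have hj := hJpos y z
      have hq : 0 < J y z / prOf pr Z z / prOf pr Y y := by positivity
      have hlog := Real.log_le_sub_one_of_pos hq
      rw [Real.log_div (by positivity) hy.ne'] at hlog
      have h2 : prOf pr Y y * prOf pr Z z * (Real.log (J y z / prOf pr Z z) - Real.log (prOf pr Y y))
          ≤ prOf pr Y y * prOf pr Z z * (J y z / prOf pr Z z / prOf pr Y y - 1) :=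
        mul_le_mul_of_nonneg_left hlog (by positivity)
      have h3 : prOf pr Y y * prOf pr Z z * (J y z / prOf pr Z z / prOf pr Y y - 1)
          = J y z - prOf pr Y y * prOf pr Z z := by
        field_simp
      nlinarith [h2, h3]
    refine hstep.trans (le_of_eq ?_)
    simp only [Finset.sum_add_distrib, Finset.sum_sub_distrib]
    rw [hJ1]
    have h4 : ∀ y, ∑ z, prOf pr Y y * prOf pr Z z = prOf pr Y y := by
      intro y
      rw [← Finset.mul_sum, hPz1, mul_one]
    have h5 : ∀ y, ∑ z, prOf pr Y y * prOf pr Z z * Real.log (prOf pr Y y)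
        = prOf pr Y y * Real.log (prOf pr Y y) := by
      intro y
      rw [← Finset.sum_mul, h4 y]
    simp only [h4, h5, hPy1]
    ring
  -- combine
  rw [hmi, hA]
  have hneg : ∀ (f : ℝ), Real.negMulLog f = -(f * Real.log f) := fun f => by
    rw [Real.negMulLog, neg_mul]
  simp only [hneg]
  have e1 : (∑ y, -(prOf pr Y y * Real.log (prOf pr Y y)))
      = -(∑ y, prOf pr Y y * Real.log (prOf pr Y y)) := by rw [Finset.sum_neg_distrib]
  have e2 : (∑ z, -(prOf pr Z z * Real.log (prOf pr Z z)))
      = -(∑ z, prOf pr Z z * Real.log (prOf pr Z z)) := by rw [Finset.sum_neg_distrib]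
  have e3 : (∑ y, ∑ z, -(J y z * Real.log (J y z)))
      = -(∑ y, ∑ z, J y z * Real.log (J y z)) := by
    simp [Finset.sum_neg_distrib]
  rw [e1, e2, e3]
  linarith [hB]
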